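/- Let V be an n×n complex matrix, k ∈ {2,…,n}, i ∈ {1,…,k−1}. Set α = {1,…,k−1} \ {i}, β = α′ \ {k} (where α′ is the complement of α in {1,…,n}), and β′ the complement of β. Then |e_β ∧ e_{β′}| · |(V^(n−k+1) e_{(k,…,n)}) ∧ e_{β′}| = V_{ik}, where V^(m) is the derivation extension of V to ⋀^m ℂ^n, e_γ = ⋀_{j∈γ} e_j in increasing order, and |h| is the coordinate of h ∈ ⋀^n ℂ^n relative to e_1 ∧ … ∧ e_n. -/

import Mathlib

/-!
Write `β = {i} ∪ (k, n]`. By the Leibniz rule,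
`V^(m) e_{(k,…,n)} = V e_k ∧ e_{(k+1,…,n)} + e_k ∧ V^(m-1) e_{(k+1,…,n)}`. The second summand
vanishes against `e_{β'}`, which contains `e_k`; in `V e_k = ∑_j V_{jk} e_j` only `j = i` survives
against `e_{(k+1,…,n)} ∧ e_{β'}`, whose indices are all the others. Hence the second coordinate is
`V_{ik}` times the first, and the first is the determinant of a permutation matrix, a sign.
-/

open ExteriorAlgebra

/-- The wedge `e_{s₁} ∧ ⋯ ∧ e_{sₘ}` of standard basis vectors over the increasingly
sorted index set `s`. -/
noncomputable def stdWedge (n : ℕ) (s : Finset (Fin n)) : ExteriorAlgebra ℂ (Fin n → ℂ) :=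
  ((s.sort (· ≤ ·)).map fun j => ExteriorAlgebra.ι ℂ (Pi.single j (1 : ℂ))).prod

/-- The value `V^(m)(⋀_{j∈s} e_j)` of the derivation extension of a matrix `V` on the
wedge of the standard basis vectors indexed by `s`. -/
noncomputable def derivWedge (n : ℕ) (V : Matrix (Fin n) (Fin n) ℂ) (s : Finset (Fin n)) :
    ExteriorAlgebra ℂ (Fin n → ℂ) :=
  ∑ j ∈ s, ((s.sort (· ≤ ·)).map fun m =>
    ExteriorAlgebra.ι ℂ
      (if m = j then V.mulVec (Pi.single j (1 : ℂ)) else Pi.single m (1 : ℂ))).prod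

section ExteriorAlgebra

variable {R M : Type*} [CommRing R] [AddCommGroup M] [Module R M]

theorem ExteriorAlgebra.prod_map_ι_eq_ιMulti (L : List M) :
    (L.map (ι R)).prod = ιMulti R L.length L.get := by
  rw [ιMulti_apply]
  simp

theorem ExteriorAlgebra.prod_map_ι_eq_zero_of_not_nodup {L : List M} (hL : ¬ L.Nodup) :
    (L.map (ι R)).prod = 0 := by
  rw [prod_map_ι_eq_ιMulti]
  exact AlternatingMap.map_eq_zero_of_not_injective _ _ (List.nodup_iff_injective_get.not.mp hL)

theorem ExteriorAlgebra.ι_mul_prod_mul_prod_eq_zero {v : M} {L₁ L₂ : List M}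
    (hv : v ∈ L₁ ++ L₂) :
    ι R v * (L₁.map (ι R)).prod * (L₂.map (ι R)).prod = 0 := by
  rw [mul_assoc, ← List.prod_append, ← List.map_append, ← List.prod_cons, ← List.map_cons]
  exact prod_map_ι_eq_zero_of_not_nodup fun h => (List.nodup_cons.mp h).1 hv

end ExteriorAlgebra

/-- The coordinate `|h|` of `h` along `e₁ ∧ ⋯ ∧ eₙ`. -/
noncomputable def coordMap (R : Type*) [CommRing R] (n : ℕ) :
    ExteriorAlgebra R (Fin n → R) →ₗ[R] R :=
  liftAlternating fun i =>
    if h : i = n then Matrix.detRowAlternating.domDomCongr (finCongr h).symm else 0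

theorem coordMap_prod_map_ι (R : Type*) [CommRing R] {n : ℕ} (L : List (Fin n → R))
    (hL : L.length = n) :
    coordMap R n (L.map (ι R)).prod = (Matrix.of fun i => L.get (Fin.cast hL.symm i)).det := by
  rw [prod_map_ι_eq_ιMulti, coordMap, liftAlternating_apply_ιMulti, dif_pos hL]
  rfl

theorem Matrix.det_of_single_mul_self {ι R : Type*} [Fintype ι] [DecidableEq ι] [CommRing R]
    {g : ι → ι} (hg : Function.Injective g) :
    (Matrix.of fun i => Pi.single (g i) (1 : R)).det *
      (Matrix.of fun i => Pi.single (g i) (1 : R)).det = 1 := by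
  let σ : Equiv.Perm ι := Equiv.ofBijective g hg.bijective_of_finite
  have hσ : (Matrix.of fun i => Pi.single (g i) (1 : R)) = σ.permMatrix R := by
    ext i j
    simp [Equiv.Perm.permMatrix, PEquiv.toMatrix_apply, Pi.single_apply, σ, eq_comm]
  rw [hσ, Matrix.det_permutation, ← Int.cast_mul, ← Units.val_mul, Int.units_mul_self]
  simp

section Wedge

variable {n : ℕ}

theorem stdWedge_eq_prod (s : Finset (Fin n)) :
    stdWedge n s =
      (((s.sort (· ≤ ·)).map fun j => (Pi.single j 1 : Fin n → ℂ)).map (ι ℂ)).prod := by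
  rw [List.map_map]
  rfl

theorem coordMap_stdWedge_univ : coordMap ℂ n (stdWedge n Finset.univ) = 1 := by
  rw [stdWedge_eq_prod, coordMap_prod_map_ι ℂ _ (by simp)]
  convert Matrix.det_one (n := Fin n) (R := ℂ)
  ext i j
  simp [Fin.sort_univ, Matrix.one_apply, Pi.single_apply, eq_comm]

theorem coordMap_stdWedge_mul_stdWedge_compl_mul_self (s : Finset (Fin n)) :
    coordMap ℂ n (stdWedge n s * stdWedge n sᶜ) *
      coordMap ℂ n (stdWedge n s * stdWedge n sᶜ) = 1 := by
  set l := s.sort (· ≤ ·) ++ sᶜ.sort (· ≤ ·)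
  have hlen : l.length = n := by simp [l, Finset.card_add_card_compl]
  have hnodup : l.Nodup :=
    (s.sort_nodup _).append (sᶜ.sort_nodup _) fun a ha hb => by simp_all
  rw [stdWedge_eq_prod, stdWedge_eq_prod, ← List.prod_append, ← List.map_append,
    ← List.map_append, coordMap_prod_map_ι ℂ _ (by simp)]
  simp only [List.get_eq_getElem, List.getElem_map]
  exact Matrix.det_of_single_mul_self (g := fun i => l.get (Fin.cast hlen.symm i))
    ((List.nodup_iff_injective_get.mp hnodup).comp (Fin.cast_injective _))

theorem stdWedge_insert_of_lt {a : Fin n} {s : Finset (Fin n)} (ha : ∀ b ∈ s, a < b) :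
    stdWedge n (insert a s) = ι ℂ (Pi.single a 1) * stdWedge n s := by
  rw [stdWedge, Finset.sort_insert (· ≤ ·) (fun b hb => (ha b hb).le) fun h => lt_irrefl a (ha a h)]
  rfl

theorem derivWedge_insert_of_lt (V : Matrix (Fin n) (Fin n) ℂ) {a : Fin n} {s : Finset (Fin n)}
    (ha : ∀ b ∈ s, a < b) :
    derivWedge n V (insert a s) =
      ι ℂ (V.mulVec (Pi.single a 1)) * stdWedge n s + ι ℂ (Pi.single a 1) * derivWedge n V s := by
  have has : a ∉ s := fun h => lt_irrefl a (ha a h)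
  rw [derivWedge, derivWedge, Finset.sort_insert (· ≤ ·) (fun b hb => (ha b hb).le) has,
    Finset.sum_insert has, Finset.mul_sum]
  congr 1
  · simp only [List.map_cons, List.prod_cons, stdWedge, if_true]
    congr 2
    refine List.map_congr_left fun m hm => ?_
    rw [if_neg (ne_of_lt (ha m ((Finset.mem_sort _).mp hm))).symm]
  · refine Finset.sum_congr rfl fun j hj => ?_
    simp only [List.map_cons, List.prod_cons]
    rw [if_neg (ne_of_lt (ha j hj))]

theorem ι_mulVec_single_mul_stdWedge_mul_stdWedge (V : Matrix (Fin n) (Fin n) ℂ)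
    {a i : Fin n} {s u : Finset (Fin n)} (hcover : ∀ j, j ≠ i → j ∈ s ∨ j ∈ u) :
    ι ℂ (V.mulVec (Pi.single a 1)) * stdWedge n s * stdWedge n u =
      V i a • (ι ℂ (Pi.single i 1) * stdWedge n s * stdWedge n u) := by
  have hcol : V.mulVec (Pi.single a 1) = ∑ j, V j a • Pi.single j 1 := by
    rw [Matrix.mulVec_single_one]
    exact pi_eq_sum_univ' _
  simp only [hcol, map_sum, map_smul, Finset.sum_mul, smul_mul_assoc]
  refine Finset.sum_eq_single i (fun j _ hj => ?_) (by simp)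
  rw [stdWedge_eq_prod, stdWedge_eq_prod, ι_mul_prod_mul_prod_eq_zero, smul_zero]
  exact List.mem_append.mpr <| (hcover j hj).imp
    (fun h => List.mem_map_of_mem ((Finset.mem_sort _).mpr h))
    (fun h => List.mem_map_of_mem ((Finset.mem_sort _).mpr h))

theorem ι_single_mul_derivWedge_mul_stdWedge_eq_zero (V : Matrix (Fin n) (Fin n) ℂ)
    {a : Fin n} {s u : Finset (Fin n)} (ha : a ∈ u) :
    ι ℂ (Pi.single a 1) * derivWedge n V s * stdWedge n u = 0 := by
  rw [derivWedge, Finset.mul_sum, Finset.sum_mul]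
  refine Finset.sum_eq_zero fun j _ => ?_
  have h := ι_mul_prod_mul_prod_eq_zero (R := ℂ) (v := Pi.single a 1)
    (L₁ := (s.sort (· ≤ ·)).map fun m =>
      if m = j then V.mulVec (Pi.single j 1) else Pi.single m 1)
    (L₂ := (u.sort (· ≤ ·)).map fun m => Pi.single m 1)
    (List.mem_append_right _ (List.mem_map_of_mem ((Finset.mem_sort _).mpr ha)))
  rwa [List.map_map, List.map_map] at h

theorem derivWedge_insert_mul_stdWedge (V : Matrix (Fin n) (Fin n) ℂ)
    {a i : Fin n} {s u : Finset (Fin n)} (has : ∀ b ∈ s, a < b) (hau : a ∈ u)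
    (hcover : ∀ j, j ≠ i → j ∈ s ∨ j ∈ u) :
    derivWedge n V (insert a s) * stdWedge n u =
      V i a • (ι ℂ (Pi.single i 1) * stdWedge n s * stdWedge n u) := by
  rw [derivWedge_insert_of_lt V has, add_mul, ι_single_mul_derivWedge_mul_stdWedge_eq_zero V hau,
    add_zero, ι_mulVec_single_mul_stdWedge_mul_stdWedge V hcover]

end Wedge

/-- `|e_β ∧ e_{β'}| ⬝ |(V^(n−k+1) e_{(k,…,n)}) ∧ e_{β'}| = V_{ik}` for
`i < k`, `α = {1,…,k−1} \ {i}`, `β = α' \ {k}` (here in 0-based indexing: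
`I < K`, `α = [0, K) \ {I}`, `β = αᶜ \ {K}`, `e_{(k,…,n)}` is the wedge over `[K, n)`,
and `|h|` is the coordinate of `h` with respect to `ω = e₁ ∧ ⋯ ∧ eₙ`). -/
theorem deriv_wedge_coordinate_entry_low (n : ℕ) (V : Matrix (Fin n) (Fin n) ℂ)
    (K I : Fin n) (hIK : I < K) (s t : ℂ)
    (hs : stdWedge n ((Finset.Iio K \ {I})ᶜ \ {K}) *
        stdWedge n (((Finset.Iio K \ {I})ᶜ \ {K})ᶜ) = s • stdWedge n Finset.univ)
    (ht : derivWedge n V (Finset.Ici K) *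
        stdWedge n (((Finset.Iio K \ {I})ᶜ \ {K})ᶜ) = t • stdWedge n Finset.univ) :
    s * t = V I K := by
  set β := (Finset.Iio K \ {I})ᶜ \ {K}
  have hβ : β = insert I (Finset.Ioi K) := by
    ext x
    simp only [β, Finset.mem_sdiff, Finset.mem_compl, Finset.mem_Iio, Finset.mem_singleton,
      Finset.mem_insert, Finset.mem_Ioi, Fin.lt_def, Fin.ext_iff]
    omega
  have hs' : coordMap ℂ n (stdWedge n β * stdWedge n βᶜ) = s := by
    rw [hs, map_smul, coordMap_stdWedge_univ, smul_eq_mul, mul_one]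
  have hkey : derivWedge n V (Finset.Ici K) * stdWedge n βᶜ =
      V I K • (stdWedge n β * stdWedge n βᶜ) := by
    rw [← Finset.Ioi_insert, derivWedge_insert_mul_stdWedge V (i := I) (fun b => Finset.mem_Ioi.mp)
      (by simp [hβ, hIK.ne']) fun j hj => by simpa [hβ, hj] using lt_or_ge K j, hβ,
      stdWedge_insert_of_lt fun b hb => hIK.trans (Finset.mem_Ioi.mp hb)]
  have ht' : t = V I K * s := by
    have h := congrArg (coordMap ℂ n) ht
    rwa [hkey, map_smul, map_smul, hs', coordMap_stdWedge_univ, smul_eq_mul, smul_eq_mul,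
      mul_one, eq_comm] at h
  calc s * t = V I K * (s * s) := by rw [ht']; ring
    _ = V I K := by rw [← hs', coordMap_stdWedge_mul_stdWedge_compl_mul_self, mul_one]
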